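/- For n ≥ 3, β ≥ 0, consider f_β(z) = -∑_{i=1}^n zᵢ log zᵢ + (β/2)∑_{i=1}^n zᵢ² on the simplex {z ∈ [0,1]ⁿ : ∑zᵢ = 1} (with 0·log 0 = 0). The uniform vector z = (1/n,…,1/n) is a critical point of f_β restricted to the simplex for every β, and it is a strict local maximum whenever β < n. -/

import Mathlib

/-!
`pottsF` is the sum over the coordinates of the one-variable function
`g(x) = -x log x + β x² / 2`. The directional derivative at the uniform point along `v` is
`g'(1/n) ∑ vᵢ`, which vanishes on the tangent space `∑ vᵢ = 0`. Since `g''(x) = β - 1/x`, the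
function `g` is strictly concave on the open set `{x > 0 | β x < 1}`, which contains `1/n`
exactly when `β < n`; near the uniform point every coordinate lies in that set, and strict
Jensen for a point of mean `1/n` gives `∑ g(zᵢ) < n g(1/n)` unless `z` is uniform.
-/

/-- The mean-field Potts free-energy functional `f_β` on `n` symbols. -/
noncomputable def pottsF (n : ℕ) (β : ℝ) (z : Fin n → ℝ) : ℝ :=
  -∑ i, z i * Real.log (z i) + β / 2 * ∑ i, (z i) ^ 2

open Finset Filter Topology

noncomputable def pottsTerm (β x : ℝ) : ℝ := -(x * Real.log x) + β / 2 * x ^ 2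

lemma pottsF_eq_sum_pottsTerm (n : ℕ) (β : ℝ) (z : Fin n → ℝ) :
    pottsF n β z = ∑ i, pottsTerm β (z i) := by
  simp only [pottsF, pottsTerm, sum_add_distrib, sum_neg_distrib, mul_sum]

lemma hasDerivAt_pottsTerm (β : ℝ) {x : ℝ} (hx : x ≠ 0) :
    HasDerivAt (pottsTerm β) (-(Real.log x + 1) + β * x) x :=
  ((Real.hasDerivAt_mul_log hx).neg.add ((hasDerivAt_pow 2 x).const_mul (β / 2))).congr_deriv
    (by ring)

lemma isOpen_pos_mul_lt_one (β : ℝ) : IsOpen {x : ℝ | 0 < x ∧ β * x < 1} :=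
  (isOpen_lt continuous_const continuous_id).inter
    (isOpen_lt (continuous_const.mul continuous_id) continuous_const)

lemma strictConcaveOn_pottsTerm (β : ℝ) :
    StrictConcaveOn ℝ {x | 0 < x ∧ β * x < 1} (pottsTerm β) := by
  refine strictConcaveOn_of_deriv2_neg'
    ((convex_Ioi 0).inter (convex_halfSpace_lt (IsLinearMap.isLinearMap_smul β) 1)) ?_ ?_
  · exact (Real.continuous_mul_log.neg.add (continuous_const.mul (continuous_pow 2))).continuousOn
  · rintro x ⟨hx : 0 < x, hβx : β * x < 1⟩
    have hderiv : deriv (pottsTerm β) =ᶠ[𝓝 x] fun y => -(Real.log y + 1) + β * y := by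
      filter_upwards [eventually_ne_nhds hx.ne'] with y hy using (hasDerivAt_pottsTerm β hy).deriv
    have hderiv2 : HasDerivAt (fun y => -(Real.log y + 1) + β * y) (-x⁻¹ + β) x :=
      (((Real.hasDerivAt_log hx.ne').add_const 1).neg.add
        ((hasDerivAt_id x).const_mul β)).congr_deriv (by simp)
    have hβ : β < x⁻¹ := by simpa using (lt_div_iff₀ hx).2 hβx
    show deriv (deriv (pottsTerm β)) x < 0
    rw [hderiv.deriv_eq, hderiv2.deriv]
    linarith

lemma hasDerivAt_sum_comp_const_add_mul {ι : Type*} [Fintype ι] {g : ℝ → ℝ} {g' c : ℝ}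
    (hg : HasDerivAt g g' c) (v : ι → ℝ) :
    HasDerivAt (fun t => ∑ i, g (c + t * v i)) (g' * ∑ i, v i) 0 := by
  rw [mul_sum]
  refine HasDerivAt.fun_sum fun i _ => ?_
  have hline : HasDerivAt (fun t : ℝ => c + t * v i) (v i) 0 := by
    simpa using ((hasDerivAt_id (0 : ℝ)).mul_const (v i)).const_add c
  exact HasDerivAt.comp 0 (by simpa using hg) hline

lemma StrictConcaveOn.sum_lt_card_mul_of_ne_const {ι E : Type*} [Fintype ι] [AddCommGroup E]
    [Module ℝ E] {s : Set E} {g : E → ℝ} (hg : StrictConcaveOn ℝ s g) {z : ι → E} {c : E}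
    (hz : ∀ i, z i ∈ s) (hmean : ∑ i, z i = Fintype.card ι • c) (hne : z ≠ fun _ => c) :
    ∑ i, g (z i) < Fintype.card ι * g c := by
  have hcard : (0 : ℝ) < Fintype.card ι := by
    have : Nonempty ι := by
      by_contra h
      exact hne (funext fun i => (not_nonempty_iff.1 h).elim i)
    exact_mod_cast Fintype.card_pos
  have hweights : ∑ _i : ι, (Fintype.card ι : ℝ)⁻¹ = 1 := by simp [hcard.ne']
  have hcenter : ∑ i, (Fintype.card ι : ℝ)⁻¹ • z i = c := by
    rw [← smul_sum, hmean, ← Nat.cast_smul_eq_nsmul ℝ, smul_smul, inv_mul_cancel₀ hcard.ne',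
      one_smul]
  have hjensen := (hg.lt_map_sum_iff_of_pos' (t := univ) (fun _ _ => inv_pos.2 hcard) hweights
    (fun i _ => hz i)).2 (by simpa [hcenter, funext_iff] using hne)
  rwa [hcenter, ← smul_sum, smul_eq_mul, inv_mul_lt_iff₀ hcard] at hjensen

theorem potts_uniform_critical_general (n : ℕ) (β : ℝ) :
    (∀ v : Fin n → ℝ, (∑ i, v i) = 0 →
      HasDerivAt (fun t : ℝ => pottsF n β (fun i => 1 / n + t * v i)) 0 0) ∧
    ((β : ℝ) < n → ∃ ε > 0, ∀ z : Fin n → ℝ, (∀ i, 0 ≤ z i) → (∑ i, z i) = 1 →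
      z ≠ (fun _ => 1 / n : Fin n → ℝ) → dist z (fun _ => 1 / n) < ε →
      pottsF n β z < pottsF n β (fun _ => 1 / n)) := by
  obtain rfl | hn := n.eq_zero_or_pos
  · exact ⟨fun _ _ => by simpa [pottsF] using hasDerivAt_const (0 : ℝ) (0 : ℝ),
      fun _ => ⟨1, one_pos, by simp⟩⟩
  have hn' : (0 : ℝ) < n := Nat.cast_pos.2 hn
  simp only [pottsF_eq_sum_pottsTerm]
  constructor
  · intro v hv
    simpa [hv] using hasDerivAt_sum_comp_const_add_mul (hasDerivAt_pottsTerm β (by positivity)) v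
  · intro hβn
    have huniform : (1 / n : ℝ) ∈ {x | 0 < x ∧ β * x < 1} :=
      ⟨by positivity, by rwa [mul_one_div, div_lt_one hn']⟩
    obtain ⟨ε, hε, hball⟩ := Metric.isOpen_iff.1 (isOpen_pos_mul_lt_one β) _ huniform
    refine ⟨ε, hε, fun z _ hz hne hdist => ?_⟩
    have hzmem (i : Fin n) : z i ∈ {x | 0 < x ∧ β * x < 1} :=
      hball ((dist_le_pi_dist z _ i).trans_lt hdist)
    simpa using (strictConcaveOn_pottsTerm β).sum_lt_card_mul_of_ne_const hzmem
      (by simp [hz, hn'.ne']) hne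

/-- For the mean-field Potts model, the uniform vector `(1/n,…,1/n)` is a critical
point of `f_β` restricted to the simplex for every `β ≥ 0`, and it is a strict local
maximum whenever `β < n`. -/
theorem potts_uniform_critical (n : ℕ) (hn : 3 ≤ n) (β : ℝ) (hβ : 0 ≤ β) :
    (∀ v : Fin n → ℝ, (∑ i, v i) = 0 →
      HasDerivAt (fun t : ℝ => pottsF n β (fun i => 1 / n + t * v i)) 0 0) ∧
    ((β : ℝ) < n → ∃ ε > 0, ∀ z : Fin n → ℝ, (∀ i, 0 ≤ z i) → (∑ i, z i) = 1 →
      z ≠ (fun _ => 1 / n : Fin n → ℝ) → dist z (fun _ => 1 / n) < ε →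
      pottsF n β z < pottsF n β (fun _ => 1 / n)) :=
  potts_uniform_critical_general n β
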